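/- Tightened value-function cut, validity (first part of Lemma 2 of the paper): let (y′,z*) be a bilevel feasible pair and let Φ_tight be the tightened value-function bound of z*. Then every bilevel feasible pair (y,z) satisfies π^F(y,z) ≥ Φ_tight(y). -/

import Mathlib

open Finset

attribute [local instance] Classical.propDecidable

/-- Data of an instance of the competitive dynamic facility location problem under
cumulative customer demand (CDFLP-CCD).  `pref j a b` means that customer `j`
strictly prefers option `a` over option `b`, where `none` is the no-service option. -/
structure CDFLP (I J : Type*) where
  /-- number of time periods; the period set is `{1, …, T}` -/
  T : ℕ
  /-- spawning demand of customer `j` at period `t` -/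
  d : J → ℕ → ℝ
  /-- reward per unit of demand captured at location `i` -/
  r : I → ℝ
  /-- splitting factor -/
  ρ : ℝ
  /-- strict preference: `pref j a b` means `a ≻_j b` -/
  pref : J → Option I → Option I → Prop

namespace CDFLP

variable {I J : Type*} [Fintype I] [Fintype J]

/-- The model hypotheses: `T ≥ 1`, nonnegative demands and rewards, `ρ ∈ [0,1]`,
and every `≻_j` is a strict linear order on `I ∪ {0}`. -/
def Valid (P : CDFLP I J) : Prop :=
  1 ≤ P.T ∧ (∀ j t, 0 ≤ P.d j t) ∧ (∀ i, 0 ≤ P.r i) ∧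
    0 ≤ P.ρ ∧ P.ρ ≤ 1 ∧ ∀ j, IsStrictTotalOrder (Option I) (P.pref j)

/-- The locations considered by customer `j`, i.e. those preferred over no service. -/
noncomputable def considered (P : CDFLP I J) (j : J) : Finset I :=
  Finset.univ.filter fun i => P.pref j (some i) none

/-- `w` is a location schedule: on the planning horizon it is `{0,1}`-valued and opens
at most one facility per period. -/
def IsSched (P : CDFLP I J) (w : I → ℕ → ℝ) : Prop :=
  ∀ t, 1 ≤ t → t ≤ P.T → (∀ i, w i t = 0 ∨ w i t = 1) ∧ (∑ i, w i t) ≤ 1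

/-- `A_j^t(y,z)`: considered locations of `j` opened by the leader or the follower
at period `t`. -/
noncomputable def captureSet (P : CDFLP I J) (y z : I → ℕ → ℝ) (j : J) (t : ℕ) : Finset I :=
  Finset.univ.filter fun i => P.pref j (some i) none ∧ (y i t = 1 ∨ z i t = 1)

/-- `t ∈ 𝒯` is a capture period of customer `j`. -/
def IsCapture (P : CDFLP I J) (y z : I → ℕ → ℝ) (j : J) (t : ℕ) : Prop :=
  1 ≤ t ∧ t ≤ P.T ∧ (P.captureSet y z j t).Nonempty

/-- `i` is the `≻_j`-greatest element of the capture set `A_j^t(y,z)`,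
i.e. `i = i*(j,t)`. -/
def IsPatron (P : CDFLP I J) (y z : I → ℕ → ℝ) (j : J) (t : ℕ) (i : I) : Prop :=
  i ∈ P.captureSet y z j t ∧
    ∀ k ∈ P.captureSet y z j t, k ≠ i → P.pref j (some i) (some k)

/-- The greatest capture period of `j` smaller than `t` (`0` if there is none). -/
noncomputable def lastCap (P : CDFLP I J) (y z : I → ℕ → ℝ) (j : J) (t : ℕ) : ℕ :=
  ((Finset.Ico 1 t).filter fun s => P.IsCapture y z j s).sup id

/-- `D_j^{ℓt}`: demand of customer `j` spawned in periods `ℓ+1, …, t`. -/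
noncomputable def D (P : CDFLP I J) (j : J) (ℓ t : ℕ) : ℝ :=
  ∑ s ∈ Finset.Icc (ℓ + 1) t, P.d j s

/-- `v_{ij}^{ℓt}(y,z)`: fraction of `D_j^{ℓt}` captured by the follower through
location `i` at period `t`. -/
noncomputable def v (P : CDFLP I J) (y z : I → ℕ → ℝ) (j : J) (i : I) (ℓ t : ℕ) : ℝ :=
  if P.IsCapture y z j t ∧ ℓ = P.lastCap y z j t ∧ P.IsPatron y z j t i ∧ z i t = 1 then
    1 - P.ρ * y i t
  else 0

/-- `u_{ij}^{ℓt}(y,z)`: fraction of `D_j^{ℓt}` captured by the leader through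
location `i` at period `t`. -/
noncomputable def u (P : CDFLP I J) (y z : I → ℕ → ℝ) (j : J) (i : I) (ℓ t : ℕ) : ℝ :=
  if P.IsCapture y z j t ∧ ℓ = P.lastCap y z j t ∧ P.IsPatron y z j t i ∧ y i t = 1 then
    1 - (1 - P.ρ) * z i t
  else 0

/-- The follower's profit `π^F(y,z)`. -/
noncomputable def profitF (P : CDFLP I J) (y z : I → ℕ → ℝ) : ℝ :=
  ∑ t ∈ Finset.Icc 1 P.T, ∑ ℓ ∈ Finset.range t, ∑ j : J, ∑ i ∈ P.considered j,
    P.r i * P.D j ℓ t * P.v y z j i ℓ t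

/-- The leader's profit `π^L(y,z)`. -/
noncomputable def profitL (P : CDFLP I J) (y z : I → ℕ → ℝ) : ℝ :=
  ∑ t ∈ Finset.Icc 1 P.T, ∑ ℓ ∈ Finset.range t, ∑ j : J, ∑ i ∈ P.considered j,
    P.r i * P.D j ℓ t * P.u y z j i ℓ t

/-- `(y,z)` is bilevel feasible: both are schedules and `z` is an optimal
reaction of the follower against `y`. -/
def BilevelFeasible (P : CDFLP I J) (y z : I → ℕ → ℝ) : Prop :=
  P.IsSched y ∧ P.IsSched z ∧ ∀ z', P.IsSched z' → P.profitF y z' ≤ P.profitF y z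


/-- `o_{ij}^{st}(y)`: the maximum of the `y`-values at locations/periods through which
the leader can intercept the demand portion spawned at period `s` and captured at
period `t` through location `i`; the maximum of an empty set is taken as `0`. -/
noncomputable def oMax (P : CDFLP I J) (y : I → ℕ → ℝ) (j : J) (i : I) (s t : ℕ) : ℝ :=
  max ((Finset.Ico s t ×ˢ P.considered j).fold max 0 fun p => y p.2 p.1)
      ((Finset.univ.filter fun k => P.pref j (some k) (some i)).fold max 0 fun k => y k t)

/-- The tightened value-function bound of the follower schedule `zs`, evaluated at a
leader schedule `y` (the `v`-values are taken against the empty leader schedule). -/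
noncomputable def tightenedBound (P : CDFLP I J) (zs y : I → ℕ → ℝ) : ℝ :=
  ∑ t ∈ Finset.Icc 1 P.T, ∑ ℓ ∈ Finset.range t, ∑ j : J, ∑ i ∈ P.considered j,
    P.r i * P.v (fun _ _ => 0) zs j i ℓ t *
      (P.D j ℓ t - (∑ s ∈ Finset.Icc (ℓ + 1) t, P.d j s * P.oMax y j i s t)
        - P.ρ * y i t * ∑ s ∈ Finset.Icc (ℓ + 1) t, P.d j s * (1 - P.oMax y j i s t))

end CDFLP

/-! Since `z` is an optimal reaction to `y` and `zs` is a schedule, `π^F(y,z) ≥ π^F(y,zs)`, and the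
cut is compared with `π^F(y,zs)` customer by customer and period by period. Against the empty
leader, `zs` captures `j` at `t` only through its unique open facility `i`, after the previous
`zs`-capture `ℓ₀`, and the cut term is `r_i (1 - ρ y_it) ∑_{s > ℓ₀} d_s (1 - o_s)`. If the
leader opens a facility `k ≻_j i` at `t`, every `o_s` is `1` and the term is nonpositive.
Otherwise `j` still patronizes `i` under `(y, zs)`; if `ℓ ≥ ℓ₀` is the last capture under
`(y, zs)` before `t`, it is a capture by the leader, so `o_s = 1` for `ℓ₀ < s ≤ ℓ` and the term is at
most `r_i D_j^{ℓt} v_{ij}^{ℓt}(y, zs)`. -/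

namespace CDFLP

variable {I J : Type*} [Fintype I]

section Schedules

variable {P : CDFLP I J} {w : I → ℕ → ℝ} {t : ℕ}

lemma IsSched.nonneg (hw : P.IsSched w) (ht1 : 1 ≤ t) (htT : t ≤ P.T) (i : I) : 0 ≤ w i t := by
  rcases (hw t ht1 htT).1 i with h | h <;> simp [h]

lemma IsSched.eq_zero_of_ne (hw : P.IsSched w) (ht1 : 1 ≤ t) (htT : t ≤ P.T) {a b : I}
    (ha : w a t = 1) (hba : b ≠ a) : w b t = 0 := by
  refine ((hw t ht1 htT).1 b).resolve_right fun hb => ?_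
  have := add_le_sum (fun i _ => hw.nonneg ht1 htT i) (mem_univ a) (mem_univ b) hba.symm
  linarith [(hw t ht1 htT).2]

lemma IsSched.one_sub_mul_nonneg (hw : P.IsSched w) (ht1 : 1 ≤ t) (htT : t ≤ P.T) {c : ℝ}
    (hc : c ≤ 1) (i : I) : 0 ≤ 1 - c * w i t := by
  rcases (hw t ht1 htT).1 i with h | h <;> simp [h, hc]

end Schedules

section LastCapture

variable (P : CDFLP I J) (y z : I → ℕ → ℝ) (j : J) {t : ℕ}

lemma lastCap_lt (ht : 1 ≤ t) : P.lastCap y z j t < t :=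
  (Finset.sup_lt_iff ht).mpr fun _ hs => (mem_Ico.mp (mem_filter.mp hs).1).2

lemma le_lastCap {s : ℕ} (hs1 : 1 ≤ s) (hst : s < t) (hs : P.IsCapture y z j s) :
    s ≤ P.lastCap y z j t :=
  Finset.le_sup (f := id) (mem_filter.mpr ⟨mem_Ico.mpr ⟨hs1, hst⟩, hs⟩)

lemma isCapture_lastCap (h : 0 < P.lastCap y z j t) :
    P.IsCapture y z j (P.lastCap y z j t) := by
  have hne : ((Ico 1 t).filter fun s => P.IsCapture y z j s).Nonempty := by
    by_contra hne
    simp [lastCap, not_nonempty_iff_eq_empty.mp hne] at h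
  obtain ⟨s, hs, hs_eq⟩ := Finset.exists_mem_eq_sup _ hne id
  rw [lastCap, hs_eq]
  exact (mem_filter.mp hs).2

end LastCapture

section Interception

variable (P : CDFLP I J) (y : I → ℕ → ℝ) (j : J) (i : I) {s t : ℕ}

lemma oMax_nonneg : 0 ≤ P.oMax y j i s t :=
  le_max_of_le_left ((Finset.le_fold_max _).mpr (Or.inl le_rfl))

lemma le_oMax_of_mem_Ico {k : I} {s' : ℕ} (hk : k ∈ P.considered j) (hs' : s' ∈ Ico s t) :
    y k s' ≤ P.oMax y j i s t :=
  le_max_of_le_left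
    ((Finset.le_fold_max _).mpr (Or.inr ⟨(s', k), mem_product.mpr ⟨hs', hk⟩, le_rfl⟩))

lemma le_oMax_of_pref {k : I} (hk : P.pref j (some k) (some i)) : y k t ≤ P.oMax y j i s t :=
  le_max_of_le_right ((Finset.le_fold_max _).mpr (Or.inr ⟨k, by simpa using hk, le_rfl⟩))

noncomputable def residualDemand (ℓ t : ℕ) : ℝ :=
  ∑ s ∈ Icc (ℓ + 1) t, P.d j s * (1 - P.oMax y j i s t)

lemma D_sub_sub_eq_mul_residualDemand (ℓ t : ℕ) :
    P.D j ℓ t - (∑ s ∈ Icc (ℓ + 1) t, P.d j s * P.oMax y j i s t)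
        - P.ρ * y i t * ∑ s ∈ Icc (ℓ + 1) t, P.d j s * (1 - P.oMax y j i s t) =
      (1 - P.ρ * y i t) * P.residualDemand y j i ℓ t := by
  simp only [D, residualDemand, mul_sub, mul_one, sum_sub_distrib]
  ring

end Interception

section FollowerShare

variable (P : CDFLP I J) (y z : I → ℕ → ℝ) (j : J) (i : I) {ℓ t : ℕ}

lemma v_eq_zero_of_ne_lastCap (h : ℓ ≠ P.lastCap y z j t) : P.v y z j i ℓ t = 0 :=
  if_neg fun hc => h hc.2.1

lemma v_eq_zero_of_ne_one (h : z i t ≠ 1) : P.v y z j i ℓ t = 0 :=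
  if_neg fun hc => h hc.2.2.2

lemma v_lastCap_of_isPatron (ht1 : 1 ≤ t) (htT : t ≤ P.T) (hi : P.IsPatron y z j t i)
    (hz : z i t = 1) : P.v y z j i (P.lastCap y z j t) t = 1 - P.ρ * y i t :=
  if_pos ⟨⟨ht1, htT, i, hi.1⟩, rfl, hi, hz⟩

lemma v_nonneg (hy : P.IsSched y) (hρ : P.ρ ≤ 1) : 0 ≤ P.v y z j i ℓ t := by
  unfold v
  split_ifs with h
  · exact hy.one_sub_mul_nonneg h.1.1 h.1.2.1 hρ i
  · exact le_rfl

lemma isPatron_of_forall_pref [Std.Trichotomous (P.pref j)] (hz : P.IsSched z) (ht1 : 1 ≤ t)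
    (htT : t ≤ P.T) (hi : i ∈ P.considered j) (hzi : z i t = 1)
    (hy : ∀ k, P.pref j (some k) (some i) → y k t ≠ 1) : P.IsPatron y z j t i := by
  simp only [considered, mem_filter, mem_univ, true_and] at hi
  refine ⟨by simp [captureSet, hi, hzi], fun k hk hki => ?_⟩
  simp only [captureSet, mem_filter, mem_univ, true_and, hz.eq_zero_of_ne ht1 htT hzi hki,
    zero_ne_one, or_false] at hk
  rcases trichotomous_of (P.pref j) (some i) (some k) with h | h | h
  · exact h
  · exact absurd (Option.some_injective _ h).symm hki
  · exact absurd hk.2 (hy k h)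

end FollowerShare

section CutTerm

variable (P : CDFLP I J) {y zs : I → ℕ → ℝ} {j : J} {t : ℕ}

lemma one_le_oMax_of_lastCap_lt (i : I) {s : ℕ} (ht1 : 1 ≤ t)
    (hs : P.lastCap (fun _ _ => 0) zs j t < s) (hsℓ : s ≤ P.lastCap y zs j t) :
    1 ≤ P.oMax y j i s t := by
  set ℓ := P.lastCap y zs j t
  have hℓt : ℓ < t := P.lastCap_lt y zs j ht1
  obtain ⟨hℓ1, hℓT, k, hk⟩ := P.isCapture_lastCap y zs j (t := t) (by omega)
  simp only [captureSet, mem_filter, mem_univ, true_and] at hk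
  rcases hk.2 with hyk | hzk
  · exact hyk ▸ P.le_oMax_of_mem_Ico y j i (by simpa [considered] using hk.1)
      (mem_Ico.mpr ⟨hsℓ, hℓt⟩)
  · have : ℓ ≤ P.lastCap (fun _ _ => 0) zs j t :=
      P.le_lastCap _ _ j hℓ1 hℓt ⟨hℓ1, hℓT, k, by simpa [captureSet] using ⟨hk.1, hzk⟩⟩
    omega

lemma residualDemand_le_D (hd : ∀ s, 0 ≤ P.d j s) (i : I) (ht1 : 1 ≤ t) :
    P.residualDemand y j i (P.lastCap (fun _ _ => 0) zs j t) t ≤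
      P.D j (P.lastCap y zs j t) t := by
  set ℓ₀ := P.lastCap (fun _ _ => 0) zs j t
  set ℓ := P.lastCap y zs j t
  calc P.residualDemand y j i ℓ₀ t
      ≤ ∑ s ∈ Icc (ℓ₀ + 1) t, if ℓ < s then P.d j s else 0 := by
        refine sum_le_sum fun s hs => ?_
        split_ifs with hℓs
        · exact mul_le_of_le_one_right (hd s) (by linarith [P.oMax_nonneg y j i (s := s) (t := t)])
        · have : 1 ≤ P.oMax y j i s t :=
            P.one_le_oMax_of_lastCap_lt (zs := zs) i ht1
              (by simp only [mem_Icc] at hs; omega) (by omega)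
          exact mul_nonpos_of_nonneg_of_nonpos (hd s) (by linarith)
    _ = ∑ s ∈ (Icc (ℓ₀ + 1) t).filter (ℓ < ·), P.d j s := (sum_filter _ _).symm
    _ ≤ P.D j ℓ t := sum_le_sum_of_subset_of_nonneg
        (fun s hs => by simp only [mem_filter, mem_Icc] at hs ⊢; omega) fun s _ _ => hd s

lemma profitTerm_nonneg (hd : ∀ s, 0 ≤ P.d j s) (hr : ∀ i, 0 ≤ P.r i) (hρ : P.ρ ≤ 1)
    (hy : P.IsSched y) (i : I) (ℓ t : ℕ) : 0 ≤ P.r i * P.D j ℓ t * P.v y zs j i ℓ t :=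
  mul_nonneg (mul_nonneg (hr i) (sum_nonneg fun s _ => hd s)) (P.v_nonneg y zs j i hy hρ)

lemma cutTerm_le_sum_profit [Std.Trichotomous (P.pref j)] (hd : ∀ s, 0 ≤ P.d j s)
    (hr : ∀ i, 0 ≤ P.r i) (hρ : P.ρ ≤ 1) (hy : P.IsSched y) (hzs : P.IsSched zs)
    (ht1 : 1 ≤ t) (htT : t ≤ P.T) {i : I} (hi : i ∈ P.considered j) (hzi : zs i t = 1) :
    P.r i * ((1 - P.ρ * y i t) * P.residualDemand y j i (P.lastCap (fun _ _ => 0) zs j t) t) ≤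
      ∑ ℓ ∈ range t, ∑ i ∈ P.considered j, P.r i * P.D j ℓ t * P.v y zs j i ℓ t := by
  have hsplit := hy.one_sub_mul_nonneg ht1 htT hρ i
  by_cases hlead : ∃ k, P.pref j (some k) (some i) ∧ y k t = 1
  · obtain ⟨k, hki, hyk⟩ := hlead
    have hres : P.residualDemand y j i (P.lastCap (fun _ _ => 0) zs j t) t ≤ 0 :=
      sum_nonpos fun s _ => mul_nonpos_of_nonneg_of_nonpos (hd s)
        (by linarith [hyk ▸ P.le_oMax_of_pref y j i (s := s) hki])
    exact (mul_nonpos_of_nonneg_of_nonpos (hr i) (mul_nonpos_of_nonneg_of_nonpos hsplit hres)).trans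
      (sum_nonneg fun ℓ _ => sum_nonneg fun i _ => P.profitTerm_nonneg hd hr hρ hy i ℓ t)
  · push Not at hlead
    have hpatron := P.isPatron_of_forall_pref y zs j i hzs ht1 htT hi hzi hlead
    set ℓ := P.lastCap y zs j t
    calc P.r i * ((1 - P.ρ * y i t) * P.residualDemand y j i (P.lastCap (fun _ _ => 0) zs j t) t)
        ≤ P.r i * P.D j ℓ t * P.v y zs j i ℓ t := by
          rw [P.v_lastCap_of_isPatron y zs j i ht1 htT hpatron hzi, mul_comm (1 - _), ← mul_assoc]
          exact mul_le_mul_of_nonneg_right (mul_le_mul_of_nonneg_left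
            (P.residualDemand_le_D hd i ht1) (hr i)) hsplit
      _ ≤ ∑ i ∈ P.considered j, P.r i * P.D j ℓ t * P.v y zs j i ℓ t :=
          single_le_sum (f := fun i => P.r i * P.D j ℓ t * P.v y zs j i ℓ t)
            (fun i _ => P.profitTerm_nonneg hd hr hρ hy i ℓ t) hi
      _ ≤ _ :=
          single_le_sum (f := fun ℓ => ∑ i ∈ P.considered j, P.r i * P.D j ℓ t * P.v y zs j i ℓ t)
            (fun ℓ _ => sum_nonneg fun i _ => P.profitTerm_nonneg hd hr hρ hy i ℓ t)
            (mem_range.mpr (P.lastCap_lt y zs j ht1))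

lemma sum_cut_le_sum_profit [Std.Trichotomous (P.pref j)] (hd : ∀ s, 0 ≤ P.d j s)
    (hr : ∀ i, 0 ≤ P.r i) (hρ : P.ρ ≤ 1) (hy : P.IsSched y) (hzs : P.IsSched zs)
    (ht1 : 1 ≤ t) (htT : t ≤ P.T) :
    ∑ ℓ ∈ range t, ∑ i ∈ P.considered j, P.r i * P.v (fun _ _ => 0) zs j i ℓ t *
        (P.D j ℓ t - (∑ s ∈ Icc (ℓ + 1) t, P.d j s * P.oMax y j i s t)
          - P.ρ * y i t * ∑ s ∈ Icc (ℓ + 1) t, P.d j s * (1 - P.oMax y j i s t)) ≤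
      ∑ ℓ ∈ range t, ∑ i ∈ P.considered j, P.r i * P.D j ℓ t * P.v y zs j i ℓ t := by
  simp only [D_sub_sub_eq_mul_residualDemand]
  by_cases hcap : ∃ i ∈ P.considered j, zs i t = 1
  · obtain ⟨i, hi, hzi⟩ := hcap
    have hpatron := P.isPatron_of_forall_pref (fun _ _ => 0) zs j i hzs ht1 htT hi hzi (by simp)
    rw [sum_eq_single_of_mem _ (mem_range.mpr (P.lastCap_lt _ zs j ht1)) fun ℓ _ hℓ =>
        sum_eq_zero fun k _ => by rw [P.v_eq_zero_of_ne_lastCap _ _ _ _ hℓ, mul_zero, zero_mul],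
      sum_eq_single_of_mem i hi fun k _ hki => by
        rw [P.v_eq_zero_of_ne_one _ _ _ _ (by simp [hzs.eq_zero_of_ne ht1 htT hzi hki]), mul_zero,
          zero_mul],
      P.v_lastCap_of_isPatron _ _ _ _ ht1 htT hpatron hzi]
    simpa using P.cutTerm_le_sum_profit hd hr hρ hy hzs ht1 htT hi hzi
  · push Not at hcap
    rw [sum_eq_zero fun ℓ _ => sum_eq_zero fun i hi => by
      rw [P.v_eq_zero_of_ne_one _ _ _ _ (hcap i hi), mul_zero, zero_mul]]
    exact sum_nonneg fun ℓ _ => sum_nonneg fun i _ => P.profitTerm_nonneg hd hr hρ hy i ℓ t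

end CutTerm

variable [Fintype J]

/-- **Lemma 2, validity.**  The tightened value-function cut built from a bilevel
feasible pair `(y', zs)` holds for every bilevel feasible pair `(y, z)`. -/
theorem tightened_cut_valid (P : CDFLP I J) (hP : P.Valid)
    (y' zs : I → ℕ → ℝ) (hfeas : P.BilevelFeasible y' zs)
    (y z : I → ℕ → ℝ) (hyz : P.BilevelFeasible y z) :
    P.tightenedBound zs y ≤ P.profitF y z := by
  obtain ⟨-, hd, hr, -, hρ, hpref⟩ := hP
  refine le_trans ?_ (hyz.2.2 zs hfeas.2.1)
  refine sum_le_sum fun t ht => ?_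
  obtain ⟨ht1, htT⟩ := mem_Icc.mp ht
  refine (sum_comm.trans_le (sum_le_sum fun j _ => ?_)).trans_eq sum_comm
  have := hpref j
  exact P.sum_cut_le_sum_profit (hd j) hr hρ hyz.1 hfeas.2.1 ht1 htT

end CDFLP
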